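/- arXiv:1507.08961 — 8 statements merged into one kernel-verified Lean document; each statement's English description precedes it below -/
import Mathlib

section
/- For every P ∈ [0,1], the measure μ = ρ·δ_{V_max} (all mass concentrated at the maximum speed) is a weak stationary solution of the δ model. -/
open MeasureTheory

/-- The δ-model transition kernel: for pre-interaction speeds `vs` (candidate) and
`vf` (field), the probability measure
`A_δ(vs,vf) = (1−P)·δ_{min(vs,vf)} + P·δ_{min(vs+Δv, Vmax)}`. -/
noncomputable def deltaKernel (Vmax Δv P : ℝ) (vs vf : ℝ) : Measure ℝ :=
  ENNReal.ofReal (1 - P) • Measure.dirac (min vs vf)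
    + ENNReal.ofReal P • Measure.dirac (min (vs + Δv) Vmax)

/-- `μ` is a weak stationary solution of the δ model: for every continuous test
function `φ`, `∫∫ (∫ φ dA_δ(v_*,v^*)) dμ(v_*) dμ(v^*) = ρ ∫ φ dμ`. -/
def IsWeakStationaryDelta (Vmax Δv ρ P : ℝ) (μ : Measure ℝ) : Prop :=
  ∀ φ : ℝ → ℝ, Continuous φ →
    (∫ vf, ∫ vs, (∫ v, φ v ∂(deltaKernel Vmax Δv P vs vf)) ∂μ ∂μ) = ρ * ∫ v, φ v ∂μ

/-- For every `P ∈ [0,1]`, the measure `μ = ρ·δ_{Vmax}` is a weak stationary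
solution of the δ model. -/
theorem statement0 (Vmax Δv ρ P : ℝ) (hV : 0 < Vmax) (hΔ : 0 < Δv) (hρ : 0 < ρ)
    (hP0 : 0 ≤ P) (hP1 : P ≤ 1) :
    IsWeakStationaryDelta Vmax Δv ρ P (ENNReal.ofReal ρ • Measure.dirac Vmax) := by
  intro φ hφ
  have hm : Measurable φ := hφ.measurable
  have hint : ∀ a : ℝ, Integrable φ (Measure.dirac a) := fun a =>
    ⟨hm.aestronglyMeasurable, by
      rw [HasFiniteIntegral, lintegral_dirac' _ (by fun_prop)]
      simp⟩
  have hker : ∀ vs vf : ℝ, (∫ v, φ v ∂(deltaKernel Vmax Δv P vs vf))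
      = (1 - P) * φ (min vs vf) + P * φ (min (vs + Δv) Vmax) := by
    intro vs vf
    rw [deltaKernel,
      integral_add_measure ((hint _).smul_measure ENNReal.ofReal_ne_top)
        ((hint _).smul_measure ENNReal.ofReal_ne_top),
      integral_smul_measure, integral_smul_measure,
      integral_dirac' _ _ hm.stronglyMeasurable, integral_dirac' _ _ hm.stronglyMeasurable,
      ENNReal.toReal_ofReal (by linarith), ENNReal.toReal_ofReal hP0, smul_eq_mul, smul_eq_mul]
  simp only [hker, integral_smul_measure, integral_dirac' _ _ hm.stronglyMeasurable,
    ENNReal.toReal_ofReal hρ.le]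
  have h1 : min Vmax Vmax = Vmax := min_self _
  have h2 : min (Vmax + Δv) Vmax = Vmax := min_eq_right (by linarith)
  have hsm : ∀ c : ℝ, StronglyMeasurable fun vs : ℝ =>
      (1 - P) * φ (min vs c) + P * φ (min (vs + Δv) Vmax) := fun c =>
    (((hm.comp (measurable_id.min measurable_const)).const_mul _).add
      ((hm.comp ((measurable_id.add_const _).min measurable_const)).const_mul _)).stronglyMeasurable
  have hinner : ∀ vf : ℝ, (∫ vs, (1 - P) * φ (min vs vf) + P * φ (min (vs + Δv) Vmax)
      ∂Measure.dirac Vmax) = (1 - P) * φ (min Vmax vf) + P * φ Vmax := by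
    intro vf
    rw [integral_dirac' _ _ (hsm vf), h2]
  simp only [hinner]
  have hcont : Continuous fun vf : ℝ => ρ • ((1 - P) * φ (min Vmax vf) + P * φ Vmax) := by
    fun_prop
  rw [integral_dirac' _ _ hcont.stronglyMeasurable, h1, smul_eq_mul, smul_eq_mul, smul_eq_mul]
  ring
end

section
/- Suppose P ∈ [0,1/2) and Δv = V_max/T for an integer T ≥ 1. Then the measure μ = Σ_{l=0}^{T} c_l · δ_{l·Δv}, whose atoms are located at the quantized velocities 0, Δv, 2Δv, …, V_max with the recursively defined weights c_0,…,c_T, is a weak stationary solution of the δ model. -/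
/-!
Test the weak equation against the step functions `𝟙(v > l Δv)`, `l < T`. With the tail masses
`R l = ∑_{m ≥ l} c m`, an interaction of two atoms lands above level `l` through the `min` branch
iff both atoms do, and through the acceleration branch iff the candidate is at level `≥ l` (the cap
at `Vmax = T Δv` does not matter below `T`). So the tested equation reads
`ρ R (l+1) = (1 - P) R (l+1) ^ 2 + P ρ R l`, and by summation by parts these tail equations give the
weak equation for every test function on the grid. The recursion for `c l` is the quadratic formula
for the difference of two consecutive tail equations, taking the nonnegative root; the tail
equations force `R l ≥ 0`, so also the last weight `c T = R T` is nonnegative.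
-/

open MeasureTheory

open Finset

theorem sum_range_filter_le_eq_sub {R : Type*} [AddCommGroup R] (c : ℕ → R) {l n : ℕ}
    (hl : l ≤ n) : ∑ k ∈ range n with l ≤ k, c k = ∑ k ∈ range n, c k - ∑ k ∈ range l, c k := by
  rw [← sum_filter_add_sum_filter_not (range n) (l ≤ ·), eq_sub_iff_add_eq]
  congr 2
  ext k; simp only [mem_filter, mem_range]; omega

theorem sum_range_filter_lt_eq_sub {R : Type*} [AddCommGroup R] (c : ℕ → R) {l n : ℕ}
    (hl : l < n) : ∑ k ∈ range n with l < k, c k = ∑ k ∈ range n, c k - ∑ k ∈ range (l + 1), c k :=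
  sum_range_filter_le_eq_sub c hl

theorem sum_mul_comp_eq_layercake {ι R : Type*} [CommRing R] (s : Finset ι) (w : ι → R)
    (f : ι → ℕ) (g : ℕ → R) (N : ℕ) (hf : ∀ i ∈ s, f i ≤ N) :
    ∑ i ∈ s, w i * g (f i) =
      (∑ i ∈ s, w i) * g 0 + ∑ l ∈ range N, (∑ i ∈ s with l < f i, w i) * (g (l + 1) - g l) := by
  have hg : ∀ i ∈ s, w i * g (f i) =
      w i * g 0 + ∑ l ∈ range N, if l < f i then w i * (g (l + 1) - g l) else 0 := by
    intro i hi
    rw [← sum_filter, show (range N).filter (· < f i) = range (f i) by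
      ext l; simp only [mem_filter, mem_range]; have := hf i hi; omega, ← mul_sum, sum_range_sub]
    ring
  rw [sum_congr rfl hg, sum_add_distrib, sum_mul, sum_comm]
  simp only [sum_mul, sum_ite, sum_const_zero, add_zero]

theorem sum_product_filter_lt_min {R : Type*} [CommSemiring R] (s : Finset ℕ) (c : ℕ → R) (l : ℕ) :
    ∑ p ∈ s ×ˢ s with l < min p.2 p.1, c p.1 * c p.2 = (∑ k ∈ s with l < k, c k) ^ 2 := by
  have : ∀ p : ℕ × ℕ, l < min p.2 p.1 ↔ l < p.1 ∧ l < p.2 := fun p => by omega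
  simp only [this, filter_product, sum_product, sq, sum_mul_sum]

theorem sum_product_filter_lt_min_succ {R : Type*} [CommSemiring R] (s : Finset ℕ) (c : ℕ → R)
    {l T : ℕ} (hl : l < T) :
    ∑ p ∈ s ×ˢ s with l < min (p.2 + 1) T, c p.1 * c p.2 =
      (∑ k ∈ s, c k) * ∑ k ∈ s with l ≤ k, c k := by
  have : ∀ p : ℕ × ℕ, l < min (p.2 + 1) T ↔ l ≤ p.2 := fun p => by omega
  rw [filter_congr fun p _ => this p, filter_product_right (l ≤ ·), sum_product, sum_mul_sum]

theorem mul_sq_eq_and_nonneg_of_eq_root {a b k x : ℝ} (ha : 0 < a) (hk : 0 ≤ k)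
    (hx : x = (b + √(b ^ 2 + 4 * a * k)) / (2 * a)) : a * x ^ 2 = b * x + k ∧ 0 ≤ x := by
  have hd : 0 ≤ b ^ 2 + 4 * a * k := by positivity
  have hroot : 2 * a * x = b + √(b ^ 2 + 4 * a * k) := by rw [hx]; field_simp
  constructor
  · have h4 : 4 * a * (a * x ^ 2 - (b * x + k)) = 0 := by
      linear_combination (2 * a * x - b + √(b ^ 2 + 4 * a * k)) * hroot + Real.sq_sqrt hd
    linarith [(mul_eq_zero.mp h4).resolve_left (by positivity)]
  · rw [hx]
    have hb : -b ≤ √(b ^ 2 + 4 * a * k) :=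
      (neg_le_abs b).trans (Real.abs_le_sqrt (le_add_of_nonneg_right (by positivity)))
    exact div_nonneg (by linarith) (by positivity)

theorem integral_finsetSum_smul_dirac {ι α E : Type*} [MeasurableSpace α]
    [MeasurableSingletonClass α] [NormedAddCommGroup E] [NormedSpace ℝ E] [CompleteSpace E]
    (s : Finset ι) (c : ι → ℝ) (hc : ∀ i ∈ s, 0 ≤ c i) (x : ι → α) (f : α → E) :
    ∫ a, f a ∂(∑ i ∈ s, ENNReal.ofReal (c i) • Measure.dirac (x i)) = ∑ i ∈ s, c i • f (x i) := by
  rw [integral_finsetSum_measure fun i _ =>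
    (integrable_dirac enorm_lt_top).smul_measure ENNReal.ofReal_ne_top]
  refine sum_congr rfl fun i hi => ?_
  rw [integral_smul_measure, integral_dirac, ENNReal.toReal_ofReal (hc i hi)]

theorem integral_deltaKernel {E : Type*} [NormedAddCommGroup E] [NormedSpace ℝ E] [CompleteSpace E]
    (Vmax Δv P : ℝ) (hP0 : 0 ≤ P) (hP1 : P ≤ 1) (vs vf : ℝ) (φ : ℝ → E) :
    ∫ v, φ v ∂(deltaKernel Vmax Δv P vs vf)
      = (1 - P) • φ (min vs vf) + P • φ (min (vs + Δv) Vmax) := by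
  have hint : ∀ (r a : ℝ), Integrable φ (ENNReal.ofReal r • Measure.dirac a) := fun r a =>
    (integrable_dirac enorm_lt_top).smul_measure ENNReal.ofReal_ne_top
  rw [deltaKernel, integral_add_measure (hint _ _) (hint _ _), integral_smul_measure,
    integral_smul_measure, integral_dirac, integral_dirac, ENNReal.toReal_ofReal (by linarith),
    ENNReal.toReal_ofReal hP0]

theorem isWeakStationaryDelta_grid_of_forall_sum_eq (Vmax Δv ρ P : ℝ) (T : ℕ) (c : ℕ → ℝ)
    (hΔv : 0 ≤ Δv) (hV : Vmax = T * Δv) (hP0 : 0 ≤ P) (hP1 : P ≤ 1)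
    (hc : ∀ l ∈ range (T + 1), 0 ≤ c l)
    (hsum : ∀ g : ℕ → ℝ,
      ∑ j ∈ range (T + 1), c j *
          ∑ k ∈ range (T + 1), c k * ((1 - P) * g (min k j) + P * g (min (k + 1) T))
        = ρ * ∑ l ∈ range (T + 1), c l * g l) :
    IsWeakStationaryDelta Vmax Δv ρ P
      (∑ l ∈ range (T + 1), ENNReal.ofReal (c l) • Measure.dirac ((l : ℝ) * Δv)) := by
  intro φ _
  have hmin : ∀ k j : ℕ, min ((k : ℝ) * Δv) ((j : ℝ) * Δv) = ((min k j : ℕ) : ℝ) * Δv := by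
    intro k j
    rw [Nat.cast_min, min_mul_of_nonneg _ _ hΔv]
  have hcap : ∀ k : ℕ, min ((k : ℝ) * Δv + Δv) Vmax = ((min (k + 1) T : ℕ) : ℝ) * Δv := by
    intro k
    rw [hV, Nat.cast_min, min_mul_of_nonneg _ _ hΔv, Nat.cast_succ, add_one_mul]
  simp only [integral_deltaKernel Vmax Δv P hP0 hP1, integral_finsetSum_smul_dirac _ c hc,
    smul_eq_mul, hmin, hcap]
  exact hsum fun l => φ (l * Δv)

theorem sum_sum_kernel_eq_of_tail_balance (ρ P : ℝ) (T : ℕ) (c : ℕ → ℝ)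
    (htot : ∑ k ∈ range (T + 1), c k = ρ)
    (hbal : ∀ l < T, ρ * ∑ k ∈ range (T + 1) with l < k, c k =
      (1 - P) * (∑ k ∈ range (T + 1) with l < k, c k) ^ 2
        + P * ρ * ∑ k ∈ range (T + 1) with l ≤ k, c k)
    (g : ℕ → ℝ) :
    ∑ j ∈ range (T + 1), c j *
        ∑ k ∈ range (T + 1), c k * ((1 - P) * g (min k j) + P * g (min (k + 1) T))
      = ρ * ∑ l ∈ range (T + 1), c l * g l := by
  set s := range (T + 1)
  have hf : ∀ k ∈ s, k ≤ T := fun k hk => Nat.lt_succ_iff.mp (mem_range.mp hk)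
  have hsplit : ∑ j ∈ s, c j * ∑ k ∈ s, c k * ((1 - P) * g (min k j) + P * g (min (k + 1) T))
      = (1 - P) * ∑ p ∈ s ×ˢ s, c p.1 * c p.2 * g (min p.2 p.1)
        + P * ∑ p ∈ s ×ˢ s, c p.1 * c p.2 * g (min (p.2 + 1) T) := by
    simp only [sum_product, mul_sum, ← sum_add_distrib]
    exact sum_congr rfl fun j _ => sum_congr rfl fun k _ => by ring
  rw [hsplit,
    sum_mul_comp_eq_layercake _ _ _ g T fun p hp =>
      (min_le_right _ _).trans (hf _ (mem_product.mp hp).1),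
    sum_mul_comp_eq_layercake _ _ _ g T fun p _ => min_le_right _ _,
    sum_mul_comp_eq_layercake s c (fun k => k) g T hf]
  have hmass : ∑ p ∈ s ×ˢ s, c p.1 * c p.2 = ρ ^ 2 := by rw [sum_product, ← sum_mul_sum, htot, sq]
  have hlayer : ∀ l ∈ range T,
      (1 - P) * ((∑ p ∈ s ×ˢ s with l < min p.2 p.1, c p.1 * c p.2) * (g (l + 1) - g l))
        + P * ((∑ p ∈ s ×ˢ s with l < min (p.2 + 1) T, c p.1 * c p.2) * (g (l + 1) - g l))
        = ρ * ((∑ k ∈ s with l < k, c k) * (g (l + 1) - g l)) := fun l hl => by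
    rw [sum_product_filter_lt_min, sum_product_filter_lt_min_succ s c (mem_range.mp hl), htot]
    linear_combination (g (l + 1) - g l) * (hbal l (mem_range.mp hl)).symm
  rw [hmass, htot, mul_add, mul_add, mul_add, mul_sum, mul_sum, mul_sum, add_add_add_comm,
    ← sum_add_distrib, sum_congr rfl hlayer]
  ring

theorem tail_balance_of_recursion (ρ P : ℝ) (T : ℕ) (c : ℕ → ℝ) (hρ : 0 ≤ ρ) (hP0 : 0 ≤ P)
    (hP : P < 1 / 2) (hc0 : c 0 = ρ * (1 - 2 * P) / (1 - P))
    (hcl : ∀ l, 1 ≤ l → l ≤ T - 1 →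
      c l = ((1 - 2 * P) * ρ - 2 * (1 - P) * ∑ m ∈ range l, c m
        + √(((1 - 2 * P) * ρ - 2 * (1 - P) * ∑ m ∈ range l, c m) ^ 2
            + 4 * P * (1 - P) * ρ * c (l - 1))) / (2 * (1 - P))) :
    ∀ l < T, 0 ≤ c l ∧
      ρ * (ρ - ∑ m ∈ range (l + 1), c m) =
        (1 - P) * (ρ - ∑ m ∈ range (l + 1), c m) ^ 2 + P * ρ * (ρ - ∑ m ∈ range l, c m) := by
  have h1P : 0 < 1 - P := by linarith
  intro l
  induction l with
  | zero =>
    intro _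
    simp only [zero_add, sum_range_one, sum_range_zero, hc0]
    exact ⟨div_nonneg (mul_nonneg hρ (by linarith)) h1P.le, by field_simp; ring⟩
  | succ l ih =>
    intro hl
    obtain ⟨hc_nonneg, hbal⟩ := ih (by omega)
    have hrec := hcl (l + 1) (by omega) (by omega)
    rw [Nat.add_sub_cancel, show 4 * P * (1 - P) * ρ * c l = 4 * (1 - P) * (P * ρ * c l) by ring]
      at hrec
    obtain ⟨hquad, hnonneg⟩ := mul_sq_eq_and_nonneg_of_eq_root h1P
      (mul_nonneg (mul_nonneg hP0 hρ) hc_nonneg) hrec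
    refine ⟨hnonneg, ?_⟩
    rw [sum_range_succ _ (l + 1)]
    linear_combination hbal - hquad + P * ρ * sum_range_succ c l

theorem sub_sum_range_nonneg_of_tail_balance (ρ P : ℝ) (T : ℕ) (c : ℕ → ℝ) (hρ : 0 < ρ)
    (hP0 : 0 ≤ P) (hP1 : P ≤ 1)
    (hbal : ∀ l < T, ρ * (ρ - ∑ m ∈ range (l + 1), c m) =
        (1 - P) * (ρ - ∑ m ∈ range (l + 1), c m) ^ 2 + P * ρ * (ρ - ∑ m ∈ range l, c m)) :
    ∀ l ≤ T, 0 ≤ ρ - ∑ m ∈ range l, c m := by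
  intro l
  induction l with
  | zero => simpa using hρ.le
  | succ l ih =>
    intro hl
    have hprev := ih (by omega)
    refine nonneg_of_mul_nonneg_right ?_ hρ
    rw [hbal l (by omega)]
    have : 0 ≤ 1 - P := by linarith
    positivity

/-- Suppose `P ∈ [0,1/2)` and `Δv = Vmax/T` with `T ≥ 1` an integer.  Then the
measure `μ = Σ_{l=0}^{T} c_l · δ_{l·Δv}`, with atoms at the quantized velocities
`0, Δv, …, Vmax` and the recursively defined weights `c_0, …, c_T`, is a weak
stationary solution of the δ model. -/
theorem statement1 (Vmax Δv ρ P : ℝ) (T : ℕ) (hT : 1 ≤ T)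
    (hV : 0 < Vmax) (hρ : 0 < ρ) (hP0 : 0 ≤ P) (hP : P < 1 / 2)
    (hΔv : Δv = Vmax / (T : ℝ))
    (c : ℕ → ℝ)
    (hc0 : c 0 = ρ * (1 - 2 * P) / (1 - P))
    (hcl : ∀ l, 1 ≤ l → l ≤ T - 1 →
      c l = ((1 - 2 * P) * ρ - 2 * (1 - P) * (∑ m ∈ Finset.range l, c m)
        + Real.sqrt (((1 - 2 * P) * ρ - 2 * (1 - P) * (∑ m ∈ Finset.range l, c m)) ^ 2
            + 4 * P * (1 - P) * ρ * c (l - 1))) / (2 * (1 - P)))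
    (hcT : c T = ρ - ∑ m ∈ Finset.range T, c m) :
    IsWeakStationaryDelta Vmax Δv ρ P
      (∑ l ∈ Finset.range (T + 1),
        ENNReal.ofReal (c l) • Measure.dirac ((l : ℝ) * Δv)) := by
  have hP1 : P ≤ 1 := by linarith
  have hrec := tail_balance_of_recursion ρ P T c hρ.le hP0 hP hc0 hcl
  have htail := sub_sum_range_nonneg_of_tail_balance ρ P T c hρ hP0 hP1 fun l hl => (hrec l hl).2
  have htot : ∑ k ∈ range (T + 1), c k = ρ := by rw [sum_range_succ, hcT]; ring
  have hc : ∀ l ∈ range (T + 1), 0 ≤ c l := by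
    intro l hl
    rcases (Nat.lt_succ_iff.mp (mem_range.mp hl)).lt_or_eq with hlT | rfl
    · exact (hrec l hlT).1
    · exact hcT ▸ htail l le_rfl
  have hTpos : (0 : ℝ) < T := by exact_mod_cast hT
  have hΔv_nonneg : 0 ≤ Δv := hΔv ▸ div_nonneg hV.le hTpos.le
  have hVmax : Vmax = T * Δv := by rw [hΔv, mul_div_cancel₀ _ hTpos.ne']
  refine isWeakStationaryDelta_grid_of_forall_sum_eq Vmax Δv ρ P T c hΔv_nonneg hVmax hP0 hP1 hc
    (sum_sum_kernel_eq_of_tail_balance ρ P T c htot fun l hl => ?_)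
  rw [sum_range_filter_lt_eq_sub c (by omega), sum_range_filter_le_eq_sub c (by omega), htot]
  exact (hrec l hl).2
end

section
/- Suppose P ∈ (0,1/2) and ρ > 0. Then the recursively defined weights satisfy c_l > 0 for every l with 0 ≤ l ≤ T−1. -/
/-- Suppose `P ∈ (0,1/2)` and `ρ > 0`.  Then the recursively defined weights
`c_0, …, c_{T-1}` (with `c_0 = ρ(1−2P)/(1−P)` and, for `1 ≤ l ≤ T−1`,
`c_l = [(1−2P)ρ − 2(1−P)Σ_{m<l} c_m + √(D_l)]/(2(1−P))` where
`D_l = ((1−2P)ρ − 2(1−P)Σ_{m<l} c_m)² + 4P(1−P)ρ c_{l−1}`, and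
`c_T = ρ − Σ_{m<T} c_m`) satisfy `c_l > 0` for every `0 ≤ l ≤ T−1`. -/
theorem statement2 (ρ P : ℝ) (T : ℕ) (hT : 1 ≤ T)
    (hρ : 0 < ρ) (hP0 : 0 < P) (hP : P < 1 / 2)
    (c : ℕ → ℝ)
    (hc0 : c 0 = ρ * (1 - 2 * P) / (1 - P))
    (hcl : ∀ l, 1 ≤ l → l ≤ T - 1 →
      c l = ((1 - 2 * P) * ρ - 2 * (1 - P) * (∑ m ∈ Finset.range l, c m)
        + Real.sqrt (((1 - 2 * P) * ρ - 2 * (1 - P) * (∑ m ∈ Finset.range l, c m)) ^ 2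
            + 4 * P * (1 - P) * ρ * c (l - 1))) / (2 * (1 - P)))
    (hcT : c T = ρ - ∑ m ∈ Finset.range T, c m) :
    ∀ l, l ≤ T - 1 → 0 < c l := by
  have h1P : (0:ℝ) < 1 - P := by linarith
  have h12P : (0:ℝ) < 1 - 2 * P := by linarith
  intro l hl
  induction l using Nat.strong_induction_on with
  | _ l ih =>
    match l, hl with
    | 0, _ =>
      rw [hc0]; positivity
    | Nat.succ n, hl =>
      have hprev : 0 < c n := ih n (Nat.lt_succ_self n) (by omega)
      rw [hcl (n + 1) (by omega) hl]
      set A := (1 - 2 * P) * ρ - 2 * (1 - P) * (∑ m ∈ Finset.range (n + 1), c m) with hA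
      have hcn : c (n + 1 - 1) = c n := by norm_num
      have hB : 0 < 4 * P * (1 - P) * ρ * c (n + 1 - 1) := by
        rw [hcn]; positivity
      have habs : |A| < Real.sqrt (A ^ 2 + 4 * P * (1 - P) * ρ * c (n + 1 - 1)) := by
        rw [← Real.sqrt_sq_eq_abs]
        exact Real.sqrt_lt_sqrt (sq_nonneg A) (by linarith)
      have hneg : -A ≤ |A| := neg_le_abs A
      apply div_pos (by linarith) (by linarith)
end

section
/- Let N ≥ 1 and, for each j = 1,…,N, let A^j be an N×N real matrix with nonnegative entries such that Σ_{j=1}^{N} (A^j)_{hk} = 1 for all indices h,k (stochasticity with respect to j). Then for every initial datum f⁰ ∈ ℝ^N with f⁰_j ≥ 0 for all j, the ODE system f_j'(t) = f(t)ᵀ A^j f(t) − f_j(t)·Σ_{k=1}^{N} f_k(t), j = 1,…,N, admits a unique solution f : [0,∞) → ℝ^N with f(0) = f⁰; moreover the solution is componentwise nonnegative, f_j(t) ≥ 0 for all j and all t ≥ 0, and its total mass is conserved: Σ_{j=1}^{N} f_j(t) = Σ_{j=1}^{N} f⁰_j for all t ≥ 0. -/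
/-!
The field `F_j(x) = xᵀ A^j x - x_j Σ_k x_k` is quadratic, hence locally Lipschitz, which gives
uniqueness. Stochasticity of the `A^j` gives `Σ_j F_j = 0`, so the total mass `S` is conserved,
and nonnegativity of their entries gives `F_j(x) ≥ 0` whenever `x ≥ 0` and `x_j = 0`. So we solve
the system with `x` replaced by its projection onto the box `[0, S]^N`: this field is globally
Lipschitz and bounded, so Picard–Lindelöf gives a solution on `[0, ∞)`. A component of it can
never become negative, since its derivative is nonnegative wherever it is, and then mass
conservation keeps the solution in the box, where the truncation has no effect.
-/

open Set
open scoped NNReal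

theorem LocallyLipschitz.exists_lipschitzWith_comp {α E E' : Type*} [PseudoEMetricSpace α]
    [PseudoMetricSpace E] [PseudoMetricSpace E'] {F : E → E'} (hF : LocallyLipschitz F)
    {P : α → E} {K : ℝ≥0} (hP : LipschitzWith K P) {s : Set E} (hs : IsCompact s)
    (hPs : ∀ x, P x ∈ s) :
    ∃ L, LipschitzWith L (F ∘ P) := by
  obtain ⟨L, hL⟩ := hF.locallyLipschitzOn.exists_lipschitzOnWith_of_compact hs
  exact ⟨L * K, lipschitzOnWith_univ.1 (hL.comp hP.lipschitzOnWith fun x _ => hPs x)⟩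

section ODE

variable {E : Type*} [NormedAddCommGroup E] [NormedSpace ℝ E]

theorem LocallyLipschitz.eqOn_Icc_of_hasDerivWithinAt {F : E → E} (hF : LocallyLipschitz F)
    {f g : ℝ → E} {a b : ℝ}
    (hf : ∀ t ∈ Icc a b, HasDerivWithinAt f (F (f t)) (Icc a b) t)
    (hg : ∀ t ∈ Icc a b, HasDerivWithinAt g (F (g t)) (Icc a b) t) (ha : f a = g a) :
    EqOn f g (Icc a b) := by
  have hfc : ContinuousOn f (Icc a b) := fun t ht => (hf t ht).continuousWithinAt
  have hgc : ContinuousOn g (Icc a b) := fun t ht => (hg t ht).continuousWithinAt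
  obtain ⟨K, hK⟩ := hF.locallyLipschitzOn.exists_lipschitzOnWith_of_compact
    ((isCompact_Icc.image_of_continuousOn hfc).union (isCompact_Icc.image_of_continuousOn hgc))
  exact ODE_solution_unique_of_mem_Icc_right (fun _ _ => hK) hfc
    (fun t ht => (hf t (Ico_subset_Icc_self ht)).mono_of_mem_nhdsWithin (Icc_mem_nhdsGE_of_mem ht))
    (fun _ ht => Or.inl (mem_image_of_mem f (Ico_subset_Icc_self ht))) hgc
    (fun t ht => (hg t (Ico_subset_Icc_self ht)).mono_of_mem_nhdsWithin (Icc_mem_nhdsGE_of_mem ht))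
    (fun _ ht => Or.inr (mem_image_of_mem g (Ico_subset_Icc_self ht))) ha

theorem LocallyLipschitz.eqOn_Ici_of_hasDerivWithinAt {F : E → E} (hF : LocallyLipschitz F)
    {f g : ℝ → E} {a : ℝ}
    (hf : ∀ t ∈ Ici a, HasDerivWithinAt f (F (f t)) (Ici a) t)
    (hg : ∀ t ∈ Ici a, HasDerivWithinAt g (F (g t)) (Ici a) t) (ha : f a = g a) :
    EqOn f g (Ici a) := fun _ ht =>
  hF.eqOn_Icc_of_hasDerivWithinAt (fun s hs => (hf s hs.1).mono Icc_subset_Ici_self)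
    (fun s hs => (hg s hs.1).mono Icc_subset_Ici_self) ha ⟨ht, le_rfl⟩

theorem LipschitzWith.exists_forall_mem_Icc_hasDerivWithinAt [CompleteSpace E] {G : E → E}
    {K : ℝ≥0} (hG : LipschitzWith K G) {C : ℝ≥0} (hC : ∀ x, ‖G x‖ ≤ C) (x₀ : E) {T : ℝ}
    (hT : 0 ≤ T) :
    ∃ u : ℝ → E, u 0 = x₀ ∧ ∀ t ∈ Icc 0 T, HasDerivWithinAt u (G (u t)) (Icc 0 T) t :=
  IsPicardLindelof.exists_eq_forall_mem_Icc_hasDerivWithinAt₀ (t₀ := ⟨0, le_rfl, hT⟩)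
    (a := ⟨C * T, by positivity⟩) (IsPicardLindelof.of_time_independent (fun x _ => hC x)
      hG.lipschitzOnWith (by simp [max_eq_left hT]; rfl))

theorem LipschitzWith.exists_forall_mem_Ici_hasDerivWithinAt [CompleteSpace E] {G : E → E}
    {K : ℝ≥0} (hG : LipschitzWith K G) {C : ℝ≥0} (hC : ∀ x, ‖G x‖ ≤ C) (x₀ : E) :
    ∃ u : ℝ → E, u 0 = x₀ ∧ ∀ t ∈ Ici 0, HasDerivWithinAt u (G (u t)) (Ici 0) t := by
  choose sol hsol0 hsol using fun n : ℕ =>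
    hG.exists_forall_mem_Icc_hasDerivWithinAt hC x₀ (Nat.cast_nonneg n)
  have hglue : ∀ (n : ℕ), ∀ t ∈ Icc (0 : ℝ) n, sol ⌈t⌉₊ t = sol n t := by
    intro n t ht
    have hsub : ∀ m : ℕ, Icc (0 : ℝ) (min ⌈t⌉₊ n) ⊆ Icc 0 m → ∀ s ∈ Icc (0 : ℝ) (min ⌈t⌉₊ n),
        HasDerivWithinAt (sol m) (G (sol m s)) (Icc 0 (min ⌈t⌉₊ n)) s :=
      fun m hm s hs => (hsol m s (hm hs)).mono hm
    refine hG.locallyLipschitz.eqOn_Icc_of_hasDerivWithinAt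
      (hsub _ (Icc_subset_Icc_right ?_)) (hsub _ (Icc_subset_Icc_right ?_))
      (by rw [hsol0, hsol0]) ⟨ht.1, le_min (Nat.le_ceil t) ht.2⟩
    · exact_mod_cast min_le_left _ _
    · exact_mod_cast min_le_right _ _
  refine ⟨fun t => sol ⌈t⌉₊ t, by simpa using hsol0 0, fun t ht => ?_⟩
  have htn : t < (⌈t⌉₊ + 1 : ℕ) := by push_cast; linarith [Nat.le_ceil t]
  have hmem : t ∈ Icc (0 : ℝ) (⌈t⌉₊ + 1 : ℕ) := ⟨ht, htn.le⟩
  have hev : Icc (0 : ℝ) (⌈t⌉₊ + 1 : ℕ) ∈ nhdsWithin t (Ici 0) := by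
    rw [← Ici_inter_Iic]; exact inter_mem_nhdsWithin _ (Iic_mem_nhds htn)
  have hder := (hasDerivWithinAt_inter (Iic_mem_nhds htn)).1
    (by rw [Ici_inter_Iic]; exact hsol _ t hmem)
  rw [← hglue _ t hmem] at hder
  exact hder.congr_of_eventuallyEq (Filter.eventuallyEq_of_mem hev (hglue _)) (hglue _ t hmem)

end ODE

theorem nonneg_of_hasDerivWithinAt_of_neg_imp_nonneg {φ φ' : ℝ → ℝ} {a : ℝ}
    (hφ : ∀ t ∈ Ici a, HasDerivWithinAt φ (φ' t) (Ici a) t) (ha : 0 ≤ φ a)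
    (hφ' : ∀ t ∈ Ici a, φ t < 0 → 0 ≤ φ' t) {t : ℝ} (ht : a ≤ t) : 0 ≤ φ t := by
  by_contra! hneg
  have hcont : ContinuousOn φ (Icc a t) := fun s hs =>
    (hφ s hs.1).continuousWithinAt.mono Icc_subset_Ici_self
  -- `T₀` is the last time in `[a, t]` at which `φ` is nonnegative
  set P := Icc a t ∩ φ ⁻¹' Ici 0
  have hP : IsClosed P := hcont.preimage_isClosed_of_isClosed isClosed_Icc isClosed_Ici
  have hPbdd : BddAbove P := ⟨t, fun s hs => hs.1.2⟩
  set T₀ := sSup P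
  have hT₀ : T₀ ∈ P := hP.csSup_mem ⟨a, ⟨le_rfl, ht⟩, ha⟩ hPbdd
  have hT₀t : T₀ < t := lt_of_le_of_ne hT₀.1.2 fun h => hneg.not_ge (h ▸ hT₀.2)
  have hneg_after : ∀ s ∈ Ioo T₀ t, φ s < 0 := fun s hs => by
    by_contra! hs0
    exact (le_csSup hPbdd ⟨⟨hT₀.1.1.trans hs.1.le, hs.2.le⟩, hs0⟩).not_gt hs.1
  have hmono : MonotoneOn φ (Icc T₀ t) := by
    refine monotoneOn_of_hasDerivWithinAt_nonneg (convex_Icc T₀ t)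
      (hcont.mono (Icc_subset_Icc_left hT₀.1.1)) (f' := φ') ?_ ?_
    · intro s hs
      rw [interior_Icc] at hs ⊢
      have hs0 : a < s := hT₀.1.1.trans_lt hs.1
      exact ((hφ s hs0.le).hasDerivAt (Ici_mem_nhds hs0)).hasDerivWithinAt
    · intro s hs
      rw [interior_Icc] at hs
      exact hφ' s (hT₀.1.1.trans hs.1.le) (hneg_after s hs)
  exact hneg.not_ge (hT₀.2.trans (hmono ⟨le_rfl, hT₀t.le⟩ ⟨hT₀t.le, le_rfl⟩ hT₀t.le))

section Box

variable {ι : Type*}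

def boxClamp (S : ℝ) (x : ι → ℝ) : ι → ℝ := fun j => max 0 (min (x j) S)

theorem lipschitzWith_boxClamp [Fintype ι] (S : ℝ) : LipschitzWith 1 (boxClamp (ι := ι) S) :=
  LipschitzWith.of_dist_le_mul fun x y =>
    (dist_pi_le_iff (by positivity)).2 fun j =>
      (((LipschitzWith.eval j).min_const S).const_max 0).dist_le_mul x y

theorem boxClamp_mem_Icc {S : ℝ} (hS : 0 ≤ S) (x : ι → ℝ) : boxClamp S x ∈ Icc 0 fun _ => S :=
  ⟨fun _ => le_max_left _ _, fun _ => max_le hS (min_le_right _ _)⟩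

theorem boxClamp_eq_self {S : ℝ} {x : ι → ℝ} (hx : x ∈ Icc 0 fun _ => S) : boxClamp S x = x :=
  funext fun j => by
    have h0 : 0 ≤ x j := hx.1 j
    simp [boxClamp, h0, hx.2 j]

theorem boxClamp_apply_of_neg (S : ℝ) {x : ι → ℝ} {j : ι} (hxj : x j < 0) :
    boxClamp S x j = 0 :=
  max_eq_left ((min_le_left _ _).trans hxj.le)

end Box

section Kinetic

variable {ι : Type*} [Fintype ι]

def kineticField (A : ι → Matrix ι ι ℝ) (x : ι → ℝ) : ι → ℝ :=
  fun j => (∑ h, ∑ k, x h * A j h k * x k) - x j * ∑ k, x k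

theorem contDiff_kineticField (A : ι → Matrix ι ι ℝ) : ContDiff ℝ 1 (kineticField A) := by
  unfold kineticField
  fun_prop

theorem sum_kineticField {A : ι → Matrix ι ι ℝ} (hA : ∀ h k, ∑ j, A j h k = 1) (x : ι → ℝ) :
    ∑ j, kineticField A x j = 0 := by
  have hgain : ∑ j, ∑ h, ∑ k, x h * A j h k * x k = ∑ h, ∑ k, x h * x k := by
    rw [Finset.sum_comm]
    refine Finset.sum_congr rfl fun h _ => ?_
    rw [Finset.sum_comm]
    refine Finset.sum_congr rfl fun k _ => ?_
    rw [← Finset.sum_mul, ← Finset.mul_sum, hA, mul_one]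
  simp only [kineticField, Finset.sum_sub_distrib, hgain, ← Finset.sum_mul, Finset.sum_mul_sum,
    sub_self]

theorem kineticField_nonneg_of_eq_zero {A : ι → Matrix ι ι ℝ} (hA : ∀ j h k, 0 ≤ A j h k)
    {x : ι → ℝ} (hx : 0 ≤ x) {j : ι} (hxj : x j = 0) : 0 ≤ kineticField A x j := by
  simp only [kineticField, hxj, zero_mul, sub_zero]
  exact Finset.sum_nonneg fun h _ => Finset.sum_nonneg fun k _ =>
    mul_nonneg (mul_nonneg (hx h) (hA j h k)) (hx k)

theorem sum_eq_of_hasDerivWithinAt_kineticField {A : ι → Matrix ι ι ℝ}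
    (hA : ∀ h k, ∑ j, A j h k = 1) {u v : ℝ → ι → ℝ} {a : ℝ}
    (hu : ∀ t ∈ Ici a, HasDerivWithinAt u (kineticField A (v t)) (Ici a) t) {t : ℝ}
    (ht : a ≤ t) : ∑ j, u t j = ∑ j, u a j := by
  have hsum : ∀ s ∈ Ici a, HasDerivWithinAt (fun s => ∑ j, u s j) 0 (Ici a) s := fun s hs => by
    have := HasDerivWithinAt.fun_sum (u := Finset.univ) fun j _ =>
      hasDerivWithinAt_pi.1 (hu s hs) j
    rwa [sum_kineticField hA] at this
  exact constant_of_has_deriv_right_zero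
    (fun s hs => (hsum s hs.1).continuousWithinAt.mono Icc_subset_Ici_self)
    (fun s hs => (hsum s hs.1).mono (Ici_subset_Ici.2 hs.1)) t ⟨ht, le_rfl⟩

end Kinetic

theorem exists_nonneg_solution_kineticField {ι : Type*} [Fintype ι] {A : ι → Matrix ι ι ℝ}
    (hpos : ∀ j h k, 0 ≤ A j h k) (hstoch : ∀ h k, ∑ j, A j h k = 1) {f₀ : ι → ℝ}
    (hf₀ : 0 ≤ f₀) :
    ∃ f : ℝ → ι → ℝ, f 0 = f₀ ∧
      (∀ t ∈ Ici 0, HasDerivWithinAt f (kineticField A (f t)) (Ici 0) t) ∧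
      ∀ t ∈ Ici 0, 0 ≤ f t := by
  set S := ∑ j, f₀ j
  have hS : 0 ≤ S := Finset.sum_nonneg fun j _ => hf₀ j
  obtain ⟨L, hL⟩ := (contDiff_kineticField A).locallyLipschitz.exists_lipschitzWith_comp
    (lipschitzWith_boxClamp S) isCompact_Icc (boxClamp_mem_Icc hS)
  obtain ⟨C, hC⟩ :=
    isCompact_Icc.exists_bound_of_continuousOn (contDiff_kineticField A).continuous.continuousOn
  obtain ⟨u, hu0, hu⟩ := hL.exists_forall_mem_Ici_hasDerivWithinAt (C := C.toNNReal)
    (fun x => (hC _ (boxClamp_mem_Icc hS x)).trans (Real.le_coe_toNNReal C)) f₀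
  have hnonneg : ∀ t ∈ Ici 0, 0 ≤ u t := fun t ht j =>
    nonneg_of_hasDerivWithinAt_of_neg_imp_nonneg (fun s hs => hasDerivWithinAt_pi.1 (hu s hs) j)
      (hu0 ▸ hf₀ j)
      (fun _ _ hneg => kineticField_nonneg_of_eq_zero hpos (boxClamp_mem_Icc hS _).1
        (boxClamp_apply_of_neg S hneg)) ht
  have hbox : ∀ t ∈ Ici 0, u t ∈ Icc 0 fun _ => S := fun t ht => ⟨hnonneg t ht, fun j =>
    calc u t j ≤ ∑ k, u t k :=
          Finset.single_le_sum (fun k _ => hnonneg t ht k) (Finset.mem_univ j)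
      _ = S := by rw [sum_eq_of_hasDerivWithinAt_kineticField hstoch hu ht, hu0]⟩
  refine ⟨u, hu0, fun t ht => ?_, hnonneg⟩
  simpa only [Function.comp_apply, boxClamp_eq_self (hbox t ht)] using hu t ht

theorem statement7_general (N : ℕ)
    (A : Fin N → Matrix (Fin N) (Fin N) ℝ)
    (hpos : ∀ j h k, 0 ≤ A j h k)
    (hstoch : ∀ h k, ∑ j, A j h k = 1)
    (f0 : Fin N → ℝ) (hf0 : ∀ j, 0 ≤ f0 j) :
    ∃ f : ℝ → Fin N → ℝ,
      (f 0 = f0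
        ∧ (∀ t ∈ Set.Ici (0 : ℝ), ∀ j, HasDerivWithinAt (fun s => f s j)
            ((∑ h, ∑ k, f t h * A j h k * f t k) - f t j * ∑ k, f t k)
            (Set.Ici (0 : ℝ)) t)
        ∧ (∀ t ∈ Set.Ici (0 : ℝ), ∀ j, 0 ≤ f t j)
        ∧ (∀ t ∈ Set.Ici (0 : ℝ), ∑ j, f t j = ∑ j, f0 j))
      ∧ (∀ g : ℝ → Fin N → ℝ, g 0 = f0 →
          (∀ t ∈ Set.Ici (0 : ℝ), ∀ j, HasDerivWithinAt (fun s => g s j)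
            ((∑ h, ∑ k, g t h * A j h k * g t k) - g t j * ∑ k, g t k)
            (Set.Ici (0 : ℝ)) t) →
          ∀ t ∈ Set.Ici (0 : ℝ), g t = f t) := by
  obtain ⟨f, hf0eq, hf, hfnonneg⟩ := exists_nonneg_solution_kineticField hpos hstoch hf0
  refine ⟨f, ⟨hf0eq, fun t ht => hasDerivWithinAt_pi.1 (hf t ht), hfnonneg, fun t ht => ?_⟩,
    fun g hg0 hg t ht => ?_⟩
  · rw [sum_eq_of_hasDerivWithinAt_kineticField hstoch hf ht, hf0eq]
  · exact (contDiff_kineticField A).locallyLipschitz.eqOn_Ici_of_hasDerivWithinAt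
      (fun s hs => hasDerivWithinAt_pi.2 (hg s hs)) hf (hg0.trans hf0eq.symm) ht

/-- (Delitala–Tosin type well-posedness.)  Let `N ≥ 1` and, for each `j`, let
`A^j` be an `N×N` real matrix with nonnegative entries such that
`Σ_j (A^j)_{hk} = 1` for all `h,k`.  Then for every initial datum `f⁰ ≥ 0`
(componentwise) the ODE system
`f_j' = fᵀ A^j f − f_j · Σ_k f_k`, `j = 1,…,N`,
admits a unique solution on `[0,∞)` with `f(0) = f⁰`; moreover the solution is
componentwise nonnegative and its total mass `Σ_j f_j(t)` is conserved. -/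
theorem statement7 (N : ℕ) (hN : 1 ≤ N)
    (A : Fin N → Matrix (Fin N) (Fin N) ℝ)
    (hpos : ∀ j h k, 0 ≤ A j h k)
    (hstoch : ∀ h k, ∑ j, A j h k = 1)
    (f0 : Fin N → ℝ) (hf0 : ∀ j, 0 ≤ f0 j) :
    ∃ f : ℝ → Fin N → ℝ,
      (f 0 = f0
        ∧ (∀ t ∈ Set.Ici (0 : ℝ), ∀ j, HasDerivWithinAt (fun s => f s j)
            ((∑ h, ∑ k, f t h * A j h k * f t k) - f t j * ∑ k, f t k)
            (Set.Ici (0 : ℝ)) t)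
        ∧ (∀ t ∈ Set.Ici (0 : ℝ), ∀ j, 0 ≤ f t j)
        ∧ (∀ t ∈ Set.Ici (0 : ℝ), ∑ j, f t j = ∑ j, f0 j))
      ∧ (∀ g : ℝ → Fin N → ℝ, g 0 = f0 →
          (∀ t ∈ Set.Ici (0 : ℝ), ∀ j, HasDerivWithinAt (fun s => g s j)
            ((∑ h, ∑ k, g t h * A j h k * g t k) - g t j * ∑ k, g t k)
            (Set.Ici (0 : ℝ)) t) →
          ∀ t ∈ Set.Ici (0 : ℝ), g t = f t) :=
  statement7_general N A hpos hstoch f0 hf0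
end

section
/- For every f ∈ ℝ^N with Σ_{k=1}^{N} f_k = ρ, the right-hand side of the discrete δ system conserves mass: Σ_{j=1}^{N} Q_j(f) = 0. -/
/-- Right-hand side of the discrete δ system on the velocity cells `1,…,N`:
for `1 ≤ j ≤ N−1`,
`Q_j(f) = η[(1−P)f_j² + 2(1−P)f_j Σ_{k=j+1}^{N} f_k + Pρ f_{j−r} 𝟙_{j>r} − f_j Σ_{k=1}^{N} f_k]`,
and
`Q_N(f) = η[(1−P)f_N² + Pρ Σ_{h=N−r}^{N} f_h − f_N Σ_{k=1}^{N} f_k]`. -/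
noncomputable def Qdelta (η P ρ : ℝ) (r N : ℕ) (f : ℕ → ℝ) (j : ℕ) : ℝ :=
  if j = N then
    η * ((1 - P) * f N ^ 2 + P * ρ * (∑ h ∈ Finset.Icc (N - r) N, f h)
      - f N * ∑ k ∈ Finset.Icc 1 N, f k)
  else
    η * ((1 - P) * f j ^ 2 + 2 * (1 - P) * f j * (∑ k ∈ Finset.Icc (j + 1) N, f k)
      + (if r < j then P * ρ * f (j - r) else 0)
      - f j * ∑ k ∈ Finset.Icc 1 N, f k)

/-! With `m = Σ_{k=1}^{N} f_k`: the binary terms `f_j² + 2 f_j Σ_{k>j} f_k` add up to `m²`, the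
loss terms to `m²`, and the gains `Pρ f_{j-r}` (cells shifted up by `r`) together with the
gain `Pρ Σ_{h ≥ N-r} f_h` of the top cell cover every cell exactly once, giving `Pρ m`.
Hence `Σ_j Q_j(f) = η P m (ρ - m)`, which vanishes when `m = ρ`. -/

open Finset

theorem sum_Icc_sq_add_two_mul_sum_Icc_succ {R : Type*} [CommSemiring R] (f : ℕ → R) (a n : ℕ) :
    ∑ j ∈ Icc a n, (f j ^ 2 + 2 * f j * ∑ k ∈ Icc (j + 1) n, f k) = (∑ k ∈ Icc a n, f k) ^ 2 := by
  rcases lt_or_ge n a with h | h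
  · simp [Icc_eq_empty_of_lt h]
  induction h using Nat.decreasingInduction with
  | self => simp
  | of_succ k hk ih =>
    rw [← add_sum_Ioc_eq_sum_Icc hk.le, ← add_sum_Ioc_eq_sum_Icc hk.le,
      ← Icc_add_one_left_eq_Ioc, ih]
    ring

theorem sum_Icc_ite_lt_sub {M : Type*} [AddCommMonoid M] (g : ℕ → M) (r n : ℕ) :
    ∑ j ∈ Icc 1 n, (if r < j then g (j - r) else 0) = ∑ i ∈ Icc 1 (n - r), g i := by
  have hshift : (Icc 1 n).filter (r < ·) = (Icc 1 (n - r)).map (addRightEmbedding r) := by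
    rw [map_add_right_Icc]
    ext j
    simp only [mem_filter, mem_Icc]
    omega
  rw [← sum_filter, hshift, sum_map]
  simp

theorem sum_Icc_one_pred_add_sum_Icc {M : Type*} [AddCommMonoid M] (f : ℕ → M) {m n : ℕ}
    (hm : 1 ≤ m) (hmn : m ≤ n + 1) :
    ∑ i ∈ Icc 1 (m - 1), f i + ∑ i ∈ Icc m n, f i = ∑ i ∈ Icc 1 n, f i := by
  rw [← Ico_add_one_right_eq_Icc, ← Ico_add_one_right_eq_Icc, ← Ico_add_one_right_eq_Icc,
    Nat.sub_add_cancel hm, sum_Ico_consecutive f hm hmn]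

theorem sum_Icc_Qdelta (η P ρ : ℝ) {r N : ℕ} (hrN : r < N) (f : ℕ → ℝ) :
    ∑ j ∈ Icc 1 N, Qdelta η P ρ r N f j
      = η * P * (∑ k ∈ Icc 1 N, f k) * (ρ - ∑ k ∈ Icc 1 N, f k) := by
  obtain ⟨M, rfl⟩ : ∃ M, N = M + 1 := ⟨N - 1, by omega⟩
  have hlow : ∑ j ∈ Icc 1 M, Qdelta η P ρ r (M + 1) f j
      = ∑ j ∈ Icc 1 M, η * (1 - P) * (f j ^ 2 + 2 * f j * ∑ k ∈ Icc (j + 1) (M + 1), f k)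
        + ∑ j ∈ Icc 1 M, η * P * ρ * (if r < j then f (j - r) else 0)
        - ∑ j ∈ Icc 1 M, η * (∑ k ∈ Icc 1 (M + 1), f k) * f j := by
    rw [← sum_add_distrib, ← sum_sub_distrib]
    refine sum_congr rfl fun j hj => ?_
    rw [Qdelta, if_neg (by grind)]
    split_ifs <;> ring
  simp only [← mul_sum] at hlow
  have hquad := sum_Icc_sq_add_two_mul_sum_Icc_succ f 1 (M + 1)
  rw [sum_Icc_succ_top (show 1 ≤ M + 1 by omega), Icc_eq_empty_of_lt (Nat.lt_succ_self _),
    sum_empty] at hquad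
  have hgain := sum_Icc_one_pred_add_sum_Icc f (m := M + 1 - r) (n := M + 1) (by omega) (by omega)
  rw [show M + 1 - r - 1 = M - r by omega, ← sum_Icc_ite_lt_sub] at hgain
  have htop := sum_Icc_succ_top (show 1 ≤ M + 1 by omega) f
  rw [sum_Icc_succ_top (show 1 ≤ M + 1 by omega), hlow, Qdelta, if_pos rfl]
  linear_combination η * (1 - P) * hquad + η * P * ρ * hgain
    + η * (∑ k ∈ Icc 1 (M + 1), f k) * htop

theorem statement10_general (η P ρ : ℝ) (T r N : ℕ) (hT : 1 ≤ T)
    (hN : N = r * T + 1)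
    (f : ℕ → ℝ) (hmass : ∑ k ∈ Finset.Icc 1 N, f k = ρ) :
    ∑ j ∈ Finset.Icc 1 N, Qdelta η P ρ r N f j = 0 := by
  have hrN : r < N := hN ▸ Nat.lt_succ_of_le (Nat.le_mul_of_pos_right r hT)
  rw [sum_Icc_Qdelta η P ρ hrN f, hmass, sub_self, mul_zero]

/-- For every `f ∈ ℝ^N` with `Σ_{k=1}^{N} f_k = ρ`, the right-hand side of the
discrete δ system conserves mass: `Σ_{j=1}^{N} Q_j(f) = 0`. -/
theorem statement10 (Vmax Δv η P ρ : ℝ) (T r N : ℕ) (hT : 1 ≤ T) (hr : 1 ≤ r)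
    (hV : 0 < Vmax) (hΔv : Δv = Vmax / (T : ℝ)) (hN : N = r * T + 1)
    (hρ : 0 < ρ) (hη : 0 < η) (hP0 : 0 ≤ P) (hP1 : P ≤ 1)
    (f : ℕ → ℝ) (hmass : ∑ k ∈ Finset.Icc 1 N, f k = ρ) :
    ∑ j ∈ Finset.Icc 1 N, Qdelta η P ρ r N f j = 0 :=
  statement10_general η P ρ T r N hT hN f hmass
end

section
/- Suppose P ∈ [0,1/2). Define g ∈ ℝ^N by g_{l·r+1} = c_l for l = 0,1,…,T and g_j = 0 for every index j not of the form l·r+1. Then g is an equilibrium of the discrete δ system with mass ρ: Σ_{k=1}^{N} g_k = ρ and Q_j(g) = 0 for every j = 1,…,N. In particular, the equilibrium is supported only on the velocity cells whose indices are congruent to 1 modulo r (the cells containing the quantized velocities 0, Δv, …, V_max), and its nonzero values c_0,…,c_T do not depend on the refinement parameter r. -/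
open Finset

theorem nonneg_and_quadratic_eq_zero_of_eq_root {a b d D x : ℝ} (ha : 0 < a) (hd : 0 ≤ d)
    (hD : D = b ^ 2 + 4 * a * d) (hx : x = (b + √D) / (2 * a)) :
    0 ≤ x ∧ a * x ^ 2 - b * x - d = 0 := by
  have hD0 : 0 ≤ D := by rw [hD]; positivity
  refine ⟨?_, ?_⟩
  · have hb : -b ≤ √D := calc
      -b ≤ |b| := neg_le_abs b
      _ = √(b ^ 2) := (Real.sqrt_sq_eq_abs b).symm
      _ ≤ √D := Real.sqrt_le_sqrt (by nlinarith)
    rw [hx]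
    exact div_nonneg (by linarith) (by positivity)
  · have hdisc : discrim a (-b) (-d) = √D * √D := by
      rw [discrim, Real.mul_self_sqrt hD0, hD]; ring
    have := (quadratic_eq_zero_iff ha.ne' hdisc x).mpr (Or.inl (by rw [hx, neg_neg]))
    linear_combination this

section Weights

variable {P ρ : ℝ} {c : ℕ → ℝ}

noncomputable def recursiveWeight (P ρ : ℝ) (c : ℕ → ℝ) (l : ℕ) : ℝ :=
  ((1 - 2 * P) * ρ - 2 * (1 - P) * (∑ m ∈ range l, c m)
    + √(((1 - 2 * P) * ρ - 2 * (1 - P) * (∑ m ∈ range l, c m)) ^ 2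
      + 4 * P * (1 - P) * ρ * c (l - 1))) / (2 * (1 - P))

def cumulativeResidual (P ρ : ℝ) (c : ℕ → ℝ) (l : ℕ) : ℝ :=
  (1 - P) * (∑ m ∈ range (l + 1), c m) ^ 2 - (1 - 2 * P) * ρ * ∑ m ∈ range (l + 1), c m
    - P * ρ * ∑ m ∈ range l, c m

theorem weights_nonneg_and_cumulativeResidual_eq_zero {T : ℕ} (hρ : 0 ≤ ρ) (hP0 : 0 ≤ P)
    (hP : P < 1 / 2) (hc0 : c 0 = ρ * (1 - 2 * P) / (1 - P))
    (hcl : ∀ l, 1 ≤ l → l ≤ T - 1 → c l = recursiveWeight P ρ c l) :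
    ∀ l < T, 0 ≤ c l ∧ cumulativeResidual P ρ c l = 0 := by
  have hP1 : 0 < 1 - P := by linarith
  intro l hl
  induction l with
  | zero =>
    refine ⟨by rw [hc0]; exact div_nonneg (by nlinarith) hP1.le, ?_⟩
    simp only [cumulativeResidual, zero_add, sum_range_one, sum_range_zero, hc0]
    field_simp
    ring
  | succ l ih =>
    obtain ⟨hcl_nonneg, hres⟩ := ih (by omega)
    obtain ⟨hnonneg, hquad⟩ := nonneg_and_quadratic_eq_zero_of_eq_root hP1
      (mul_nonneg (mul_nonneg hP0 hρ) hcl_nonneg) (by rw [Nat.add_sub_cancel]; ring)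
      (hcl (l + 1) (by omega) (by omega))
    refine ⟨hnonneg, ?_⟩
    simp only [cumulativeResidual, sum_range_succ] at hres hquad ⊢
    linear_combination hres + hquad

end Weights

theorem Qdelta_eq_zero_of_apply_eq_zero {η P ρ : ℝ} {r N j : ℕ} {f : ℕ → ℝ} (hjN : j ≠ N)
    (hj : f j = 0) (hjr : r < j → f (j - r) = 0) : Qdelta η P ρ r N f j = 0 := by
  rw [Qdelta, if_neg hjN, hj]
  split_ifs with h
  · rw [hjr h]; ring
  · ring

structure IsLatticeLift (r T : ℕ) (c g : ℕ → ℝ) : Prop where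
  apply_lattice : ∀ l ≤ T, g (l * r + 1) = c l
  eq_zero_of_not_lattice : ∀ j, 1 ≤ j → j ≤ T * r + 1 → (∀ l ≤ T, j ≠ l * r + 1) → g j = 0

namespace IsLatticeLift

variable {η P ρ : ℝ} {r T : ℕ} {c g : ℕ → ℝ}

theorem sum_Icc (hg : IsLatticeLift r T c g) (hr : 0 < r) (l : ℕ) :
    ∑ k ∈ Icc (l * r + 1) (T * r + 1), g k = ∑ m ∈ Ico l (T + 1), c m := by
  have hinj : Set.InjOn (· * r + 1) (Ico l (T + 1) : Set ℕ) := fun x _ y _ h =>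
    Nat.eq_of_mul_eq_mul_right hr (by simpa using h)
  have hsub : (Ico l (T + 1)).image (· * r + 1) ⊆ Icc (l * r + 1) (T * r + 1) := by
    intro k hk
    obtain ⟨m, hm, rfl⟩ := mem_image.mp hk
    rw [mem_Ico] at hm
    have := Nat.mul_le_mul_right r hm.1
    have := Nat.mul_le_mul_right r (Nat.lt_succ_iff.mp hm.2)
    rw [mem_Icc]
    omega
  have hzero : ∀ k ∈ Icc (l * r + 1) (T * r + 1), k ∉ (Ico l (T + 1)).image (· * r + 1) →
      g k = 0 := by
    intro k hk hk_not
    rw [mem_Icc] at hk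
    refine hg.eq_zero_of_not_lattice k (by omega) hk.2 fun m hm hkm => hk_not ?_
    have hlm : l ≤ m := Nat.le_of_mul_le_mul_right (by omega : l * r ≤ m * r) hr
    exact mem_image.mpr ⟨m, mem_Ico.mpr ⟨hlm, by omega⟩, hkm.symm⟩
  calc ∑ k ∈ Icc (l * r + 1) (T * r + 1), g k
      = ∑ k ∈ (Ico l (T + 1)).image (· * r + 1), g k := (sum_subset hsub hzero).symm
    _ = ∑ m ∈ Ico l (T + 1), g (m * r + 1) := sum_image hinj
    _ = ∑ m ∈ Ico l (T + 1), c m :=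
      sum_congr rfl fun m hm => hg.apply_lattice m (by rw [mem_Ico] at hm; omega)

theorem sum_Icc_eq_sub (hg : IsLatticeLift r T c g) (hr : 0 < r)
    (hmass : ∑ m ∈ range (T + 1), c m = ρ) {l : ℕ} (hl : l ≤ T + 1) :
    ∑ k ∈ Icc (l * r + 1) (T * r + 1), g k = ρ - ∑ m ∈ range l, c m := by
  rw [hg.sum_Icc hr, ← hmass, ← sum_range_add_sum_Ico c hl]
  ring

theorem sum_Icc_one (hg : IsLatticeLift r T c g) (hr : 0 < r)
    (hmass : ∑ m ∈ range (T + 1), c m = ρ) : ∑ k ∈ Icc 1 (T * r + 1), g k = ρ := by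
  simpa using hg.sum_Icc_eq_sub hr hmass (Nat.zero_le _)

theorem apply_sub_eq_zero_of_not_lattice (hg : IsLatticeLift r T c g) (hr : 0 < r) {j : ℕ}
    (hrj : r < j) (hjN : j ≤ T * r + 1) (hj : ∀ l ≤ T, j ≠ l * r + 1) : g (j - r) = 0 := by
  refine hg.eq_zero_of_not_lattice (j - r) (by omega) (by omega) fun m _ hjm => ?_
  have hm : m + 1 ≤ T := Nat.le_of_mul_le_mul_right (by rw [add_mul]; omega) hr
  exact hj (m + 1) hm (by rw [add_mul]; omega)

theorem Qdelta_eq_zero_of_lt (hg : IsLatticeLift r T c g) (hr : 0 < r)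
    (hmass : ∑ m ∈ range (T + 1), c m = ρ)
    (hres : ∀ l < T, cumulativeResidual P ρ c l = 0) {l : ℕ} (hl : l < T) :
    Qdelta η P ρ r (T * r + 1) g (l * r + 1) = 0 := by
  have hlr : (l + 1) * r ≤ T * r := Nat.mul_le_mul_right r hl
  rw [add_mul, one_mul] at hlr
  have htail : ∑ k ∈ Icc (l * r + 1 + 1) (T * r + 1), g k = ρ - ∑ m ∈ range l, c m - c l := by
    rw [Icc_add_one_left_eq_Ioc, ← hg.apply_lattice l hl.le]
    linarith [add_sum_Ioc_eq_sum_Icc (f := g) (by omega : l * r + 1 ≤ T * r + 1),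
      hg.sum_Icc_eq_sub hr hmass (by omega : l ≤ T + 1)]
  rw [Qdelta, if_neg (by omega), htail, hg.sum_Icc_one hr hmass, hg.apply_lattice l hl.le]
  cases l with
  | zero =>
    have h0 := hres 0 hl
    simp only [cumulativeResidual, zero_add, sum_range_one, sum_range_zero] at h0 ⊢
    rw [if_neg (by omega)]
    linear_combination -η * h0
  | succ k =>
    have hk := hres k (by omega)
    have hk1 := hres (k + 1) hl
    simp only [cumulativeResidual, sum_range_succ] at hk hk1 ⊢
    rw [if_pos (by rw [add_mul]; omega),
      show (k + 1) * r + 1 - r = k * r + 1 by rw [add_mul]; omega, hg.apply_lattice k (by omega)]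
    linear_combination -η * (hk1 - hk)

theorem Qdelta_top_eq_zero (hg : IsLatticeLift r T c g) (hr : 0 < r) (hT : 1 ≤ T)
    (hmass : ∑ m ∈ range (T + 1), c m = ρ) (hres : cumulativeResidual P ρ c (T - 1) = 0) :
    Qdelta η P ρ r (T * r + 1) g (T * r + 1) = 0 := by
  obtain ⟨t, rfl⟩ : ∃ t, T = t + 1 := ⟨T - 1, by omega⟩
  have hlow : ∑ k ∈ Icc (t * r + 1) ((t + 1) * r + 1), g k = c t + c (t + 1) := by
    rw [hg.sum_Icc hr, sum_Ico_succ_top (by omega), sum_Ico_succ_top le_rfl, Ico_self, sum_empty,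
      zero_add]
  rw [Qdelta, if_pos rfl, show (t + 1) * r + 1 - r = t * r + 1 by rw [add_mul]; omega, hlow,
    hg.sum_Icc_one hr hmass, hg.apply_lattice (t + 1) le_rfl]
  simp only [cumulativeResidual, Nat.add_sub_cancel, sum_range_succ] at hres hmass
  linear_combination η * hres + η * (1 - P) * (c (t + 1) - ∑ m ∈ range t, c m - c t) * hmass

end IsLatticeLift

theorem statement12_general (η P ρ : ℝ) (T r N : ℕ) (hT : 1 ≤ T) (hr : 1 ≤ r)
    (hN : N = r * T + 1)
    (hρ : 0 < ρ) (hP0 : 0 ≤ P) (hP : P < 1 / 2)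
    (c : ℕ → ℝ)
    (hc0 : c 0 = ρ * (1 - 2 * P) / (1 - P))
    (hcl : ∀ l, 1 ≤ l → l ≤ T - 1 →
      c l = ((1 - 2 * P) * ρ - 2 * (1 - P) * (∑ m ∈ Finset.range l, c m)
        + Real.sqrt (((1 - 2 * P) * ρ - 2 * (1 - P) * (∑ m ∈ Finset.range l, c m)) ^ 2
            + 4 * P * (1 - P) * ρ * c (l - 1))) / (2 * (1 - P)))
    (hcT : c T = ρ - ∑ m ∈ Finset.range T, c m)
    (g : ℕ → ℝ)
    (hg : ∀ l, l ≤ T → g (l * r + 1) = c l)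
    (hg0 : ∀ j, 1 ≤ j → j ≤ N → (∀ l, l ≤ T → j ≠ l * r + 1) → g j = 0) :
    (∑ k ∈ Finset.Icc 1 N, g k = ρ)
    ∧ (∀ j, 1 ≤ j → j ≤ N → Qdelta η P ρ r N g j = 0) := by
  rw [mul_comm] at hN
  subst hN
  have hlift : IsLatticeLift r T c g := ⟨hg, hg0⟩
  have hmass : ∑ m ∈ range (T + 1), c m = ρ := by rw [sum_range_succ, hcT]; ring
  have hres l (hl : l < T) : cumulativeResidual P ρ c l = 0 :=
    (weights_nonneg_and_cumulativeResidual_eq_zero hρ.le hP0 hP hc0 hcl l hl).2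
  refine ⟨hlift.sum_Icc_one hr hmass, fun j hj1 hjN => ?_⟩
  by_cases hj : ∃ l ≤ T, j = l * r + 1
  · obtain ⟨l, hl, rfl⟩ := hj
    rcases hl.lt_or_eq with hl | rfl
    · exact hlift.Qdelta_eq_zero_of_lt hr hmass hres hl
    · exact hlift.Qdelta_top_eq_zero hr hT hmass (hres _ (by omega))
  · push Not at hj
    exact Qdelta_eq_zero_of_apply_eq_zero (hj T le_rfl) (hg0 j hj1 hjN hj)
      fun hrj => hlift.apply_sub_eq_zero_of_not_lattice hr hrj hjN hj

/-- Suppose `P ∈ [0,1/2)`.  Define `g ∈ ℝ^N` by `g_{l·r+1} = c_l` for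
`l = 0,…,T` and `g_j = 0` for every other index, where the `c_l` are the
recursively defined weights (independent of the refinement parameter `r`).
Then `g` is an equilibrium of the discrete δ system with mass `ρ`:
`Σ_k g_k = ρ` and `Q_j(g) = 0` for every `j = 1,…,N`.  In particular the
equilibrium is supported only on the velocity cells containing the quantized
velocities `0, Δv, …, Vmax`. -/
theorem statement12 (Vmax Δv η P ρ : ℝ) (T r N : ℕ) (hT : 1 ≤ T) (hr : 1 ≤ r)
    (hV : 0 < Vmax) (hΔv : Δv = Vmax / (T : ℝ)) (hN : N = r * T + 1)
    (hρ : 0 < ρ) (hη : 0 < η) (hP0 : 0 ≤ P) (hP : P < 1 / 2)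
    (c : ℕ → ℝ)
    (hc0 : c 0 = ρ * (1 - 2 * P) / (1 - P))
    (hcl : ∀ l, 1 ≤ l → l ≤ T - 1 →
      c l = ((1 - 2 * P) * ρ - 2 * (1 - P) * (∑ m ∈ Finset.range l, c m)
        + Real.sqrt (((1 - 2 * P) * ρ - 2 * (1 - P) * (∑ m ∈ Finset.range l, c m)) ^ 2
            + 4 * P * (1 - P) * ρ * c (l - 1))) / (2 * (1 - P)))
    (hcT : c T = ρ - ∑ m ∈ Finset.range T, c m)
    (g : ℕ → ℝ)
    (hg : ∀ l, l ≤ T → g (l * r + 1) = c l)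
    (hg0 : ∀ j, 1 ≤ j → j ≤ N → (∀ l, l ≤ T → j ≠ l * r + 1) → g j = 0) :
    (∑ k ∈ Finset.Icc 1 N, g k = ρ)
    ∧ (∀ j, 1 ≤ j → j ≤ N → Qdelta η P ρ r N g j = 0) :=
  statement12_general η P ρ T r N hT hr hN hρ hP0 hP c hc0 hcl hcT g hg hg0
end

section
/- Suppose P ∈ [1/2,1]. Then the only vector f ∈ ℝ^N with nonnegative components, total mass Σ_{k=1}^{N} f_k = ρ, and Q_j(f) = 0 for every j = 1,…,N, is f = ρ·e_N, where e_N is the N-th standard basis vector; that is, for P ≥ 1/2 the unique nonnegative equilibrium of the discrete δ system with mass ρ has all vehicles in the highest velocity cell. -/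
/-- Suppose `P ∈ [1/2,1]`.  Then the only vector `f ∈ ℝ^N` with nonnegative
components, total mass `Σ_{k=1}^{N} f_k = ρ`, and `Q_j(f) = 0` for every
`j = 1,…,N`, is `f = ρ·e_N`: for `P ≥ 1/2` the unique nonnegative equilibrium
of the discrete δ system with mass `ρ` has all vehicles in the highest velocity
cell. -/
theorem statement13 (Vmax Δv η P ρ : ℝ) (T r N : ℕ) (hT : 1 ≤ T) (hr : 1 ≤ r)
    (hV : 0 < Vmax) (hΔv : Δv = Vmax / (T : ℝ)) (hN : N = r * T + 1)
    (hρ : 0 < ρ) (hη : 0 < η) (hP0 : 1 / 2 ≤ P) (hP1 : P ≤ 1)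
    (f : ℕ → ℝ)
    (hpos : ∀ j, 1 ≤ j → j ≤ N → 0 ≤ f j)
    (hmass : ∑ k ∈ Finset.Icc 1 N, f k = ρ)
    (heq : ∀ j, 1 ≤ j → j ≤ N → Qdelta η P ρ r N f j = 0) :
    ∀ j, 1 ≤ j → j ≤ N → f j = if j = N then ρ else 0 := by
  have hN2 : 2 ≤ N := by
    have : r * 1 ≤ r * T := Nat.mul_le_mul_left r hT
    omega
  have key : ∀ j, 1 ≤ j → j < N → f j = 0 := by
    intro j
    induction j using Nat.strong_induction_on with
    | _ j ih =>
      intro h1 hjN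
      have hq := heq j h1 hjN.le
      simp only [Qdelta, if_neg (Nat.ne_of_lt hjN)] at hq
      have hind : (if r < j then P * ρ * f (j - r) else 0) = 0 := by
        split
        · rename_i hrj
          rw [ih (j - r) (by omega) (by omega) (by omega)]; ring
        · rfl
      rw [hind, hmass] at hq
      by_contra hne
      have hfj : 0 < f j := lt_of_le_of_ne (hpos j h1 hjN.le) (Ne.symm hne)
      set S := ∑ k ∈ Finset.Icc (j + 1) N, f k with hSdef
      have hS : 0 ≤ S := by
        apply Finset.sum_nonneg
        intro k hk
        rw [Finset.mem_Icc] at hk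
        exact hpos k (by omega) hk.2
      have hsub : f j + S ≤ ρ := by
        rw [← hmass]
        have hsplit : f j + S = ∑ k ∈ Finset.Icc j N, f k := by
          rw [hSdef, show Finset.Icc (j+1) N = Finset.Ioc j N from Finset.Icc_add_one_left_eq_Ioc j N,
            Finset.Icc_eq_cons_Ioc hjN.le, Finset.sum_cons]
        rw [hsplit]
        apply Finset.sum_le_sum_of_subset_of_nonneg
        · apply Finset.Icc_subset_Icc_left h1
        · intro k hk _
          rw [Finset.mem_Icc] at hk
          exact hpos k hk.1 hk.2
      have hb : (1 - P) * f j ^ 2 + 2 * (1 - P) * f j * S + 0 - f j * ρ = 0 := by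
        rcases mul_eq_zero.mp hq with h | h
        · exact absurd h hη.ne'
        · exact h
      have h1' : f j * (f j + S) ≤ f j * ρ := mul_le_mul_of_nonneg_left hsub hfj.le
      have h2 : 0 ≤ (P - 1/2) * (f j ^ 2 + 2 * f j * S) := by
        apply mul_nonneg (by linarith)
        nlinarith [mul_nonneg hfj.le hS, sq_nonneg (f j)]
      nlinarith [mul_pos hfj hfj]
  intro j hj1 hjN
  by_cases hj : j = N
  · simp only [hj, if_pos rfl]
    have : ∑ k ∈ Finset.Icc 1 N, f k = f N := by
      rw [show N = (N - 1) + 1 from by omega, Finset.sum_Icc_succ_top (by omega)]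
      rw [Finset.sum_eq_zero (fun k hk => by
        rw [Finset.mem_Icc] at hk
        exact key k hk.1 (by omega))]
      rw [show (N - 1) + 1 = N from by omega]; ring
    rw [← hmass, this]; simp
  · simp only [if_neg hj]
    exact key j hj1 (lt_of_le_of_ne hjN hj)
end

section
/- Let f : [0,∞) → ℝ^N be a differentiable solution of the discrete δ system f' = Q(f). If j is an index with 1 ≤ j ≤ r and f_j(0) = 0, then f_j(t) = 0 for all t ≥ 0; that is, a velocity cell below the first acceleration jump that is initially empty remains empty for all time. -/
/-- Let `f : [0,∞) → ℝ^N` be a differentiable solution of the discrete δ system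
`f' = Q(f)`.  If `1 ≤ j ≤ r` and `f_j(0) = 0`, then `f_j(t) = 0` for all
`t ≥ 0`: a velocity cell below the first acceleration jump that is initially
empty remains empty for all time. -/
theorem statement15 (Vmax Δv η P ρ : ℝ) (T r N : ℕ) (hT : 1 ≤ T) (hr : 1 ≤ r)
    (hV : 0 < Vmax) (hΔv : Δv = Vmax / (T : ℝ)) (hN : N = r * T + 1)
    (hρ : 0 < ρ) (hη : 0 < η) (hP0 : 0 ≤ P) (hP1 : P ≤ 1)
    (f : ℝ → ℕ → ℝ)
    (hsol : ∀ t ∈ Set.Ici (0 : ℝ), ∀ j, 1 ≤ j → j ≤ N →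
      HasDerivWithinAt (fun s => f s j) (Qdelta η P ρ r N (f t) j) (Set.Ici (0 : ℝ)) t)
    (j : ℕ) (hj1 : 1 ≤ j) (hjr : j ≤ r) (h0 : f 0 j = 0) :
    ∀ t ∈ Set.Ici (0 : ℝ), f t j = 0 := by
  have hjN : j < N := by
    have : r ≤ r * T := Nat.le_mul_of_pos_right r hT
    omega
  have hjne : j ≠ N := Nat.ne_of_lt hjN
  have hnr : ¬ r < j := not_lt.2 hjr
  -- factorization of the vector field at index j
  set g : ℝ → ℝ := fun s =>
    η * ((1 - P) * f s j + 2 * (1 - P) * (∑ k ∈ Finset.Icc (j + 1) N, f s k)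
      - ∑ k ∈ Finset.Icc 1 N, f s k) with hg
  have hQ : ∀ s : ℝ, Qdelta η P ρ r N (f s) j = g s * f s j := by
    intro s
    simp only [Qdelta, if_neg hjne, if_neg hnr, hg]
    ring
  -- continuity of each coordinate on Ici 0
  have hcont : ∀ k, 1 ≤ k → k ≤ N → ContinuousOn (fun s => f s k) (Set.Ici (0 : ℝ)) := by
    intro k hk1 hk2 s hs
    exact (hsol s hs k hk1 hk2).continuousWithinAt
  have hgcont : ContinuousOn g (Set.Ici (0 : ℝ)) := by
    apply (continuousOn_const).mul
    apply ContinuousOn.sub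
    · apply ContinuousOn.add
      · exact continuousOn_const.mul (hcont j hj1 hjN.le)
      · apply continuousOn_const.mul
        apply continuousOn_finset_sum
        intro k hk
        simp only [Finset.mem_Icc] at hk
        exact hcont k (le_trans (by omega) hk.1) hk.2
    · apply continuousOn_finset_sum
      intro k hk
      simp only [Finset.mem_Icc] at hk
      exact hcont k hk.1 hk.2
  intro t ht
  simp only [Set.mem_Ici] at ht
  -- bound g on [0, t]
  obtain ⟨C, hC⟩ := (isCompact_Icc (a := (0:ℝ)) (b := t)).exists_bound_of_continuousOn
    (hgcont.mono (fun x hx => hx.1))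
  have key : ∀ s ∈ Set.Icc (0:ℝ) t, ‖f s j‖ ≤ gronwallBound 0 C 0 (s - 0) := by
    apply norm_le_gronwallBound_of_norm_deriv_right_le
      (f' := fun s => Qdelta η P ρ r N (f s) j)
    · intro s hs
      exact ((hsol s hs.1 j hj1 hjN.le).continuousWithinAt).mono
        (fun x hx => hx.1)
    · intro s hs
      exact (hsol s hs.1 j hj1 hjN.le).mono (Set.Ici_subset_Ici.2 hs.1)
    · simp [h0]
    · intro s hs
      rw [hQ s]
      have := hC s ⟨hs.1, hs.2.le⟩
      calc ‖g s * f s j‖ = ‖g s‖ * ‖f s j‖ := norm_mul _ _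
        _ ≤ C * ‖f s j‖ + 0 := by
            rw [add_zero]
            exact mul_le_mul_of_nonneg_right this (norm_nonneg _)
  have := key t ⟨ht, le_rfl⟩
  rw [gronwallBound_ε0] at this
  simp only [zero_mul] at this
  exact norm_le_zero_iff.1 this
end
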